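/- Let S_n = { F ⊆ ℕ : F is finite and nonempty, min F ≥ |F|, and max F = n }. Then |S_1| = 1, |S_2| = 1, and for all positive integers n, |S_{n+2}| = |S_{n+1}| + |S_n|; consequently the sequence (|S_n|) is the Fibonacci sequence. -/

import Mathlib

/-- `S n` is the collection of Schreier sets with maximum element `n`:
finite nonempty sets `F ⊆ ℕ` with `min F ≥ |F|` and `max F = n`. -/
def S (n : ℕ) : Set (Finset ℕ) :=
  {F | ∃ h : F.Nonempty, F.min' h ≥ F.card ∧ F.max' h = n}

/-!
A Schreier set with maximum `n` and `j + 1` elements is `n` together with `j` elements of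
`[j + 1, n)`, so `|S n| = ∑ j, (n - 1 - j).choose j`, a shallow diagonal sum of Pascal's triangle,
which is `fib n`.
-/

open Finset

lemma mem_S_iff {n : ℕ} {F : Finset ℕ} : F ∈ S n ↔ n ∈ F ∧ ∀ x ∈ F, #F ≤ x ∧ x ≤ n := by
  constructor
  · rintro ⟨hne, hmin, rfl⟩
    exact ⟨F.max'_mem hne, fun x hx => ⟨hmin.trans (F.min'_le x hx), F.le_max' x hx⟩⟩
  · rintro ⟨hn, hF⟩
    exact ⟨⟨n, hn⟩, F.le_min' _ _ fun x hx => (hF x hx).1,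
      le_antisymm (F.max'_le _ _ fun x hx => (hF x hx).2) (F.le_max' n hn)⟩

lemma S_eq_biUnion (n : ℕ) :
    S n = ↑((range n).biUnion fun j => (powersetCard j (Ico (j + 1) n)).image (insert n)) := by
  ext F
  simp only [mem_S_iff, coe_biUnion, coe_range, Set.mem_Iio, coe_image, Set.mem_iUnion,
    Set.mem_image, mem_coe, mem_powersetCard]
  constructor
  · rintro ⟨hn, hF⟩
    have hcard : #F = #(F.erase n) + 1 := (card_erase_add_one hn).symm
    refine ⟨#(F.erase n), ?_, F.erase n, ⟨fun x hx => ?_, rfl⟩, insert_erase hn⟩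
    · have := (hF n hn).1; omega
    · obtain ⟨hxn, hx⟩ := mem_erase.1 hx
      have := hF x hx
      rw [mem_Ico]; omega
  · rintro ⟨j, hj, G, ⟨hG, rfl⟩, rfl⟩
    have hnG : n ∉ G := fun h => by simpa using hG h
    rw [card_insert_of_notMem hnG]
    refine ⟨mem_insert_self n G, fun x hx => ?_⟩
    rcases mem_insert.1 hx with rfl | hx
    · omega
    · have := mem_Ico.1 (hG hx); omega

lemma ncard_S_eq_sum_choose (n : ℕ) : (S n).ncard = ∑ j ∈ range n, (n - 1 - j).choose j := by
  have notMem {j : ℕ} {G : Finset ℕ} (hG : G ∈ powersetCard j (Ico (j + 1) n)) : n ∉ G :=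
    fun h => by simpa using (mem_powersetCard.1 hG).1 h
  have card_insert {j : ℕ} {G : Finset ℕ} (hG : G ∈ powersetCard j (Ico (j + 1) n)) :
      #(insert n G) = j + 1 := by
    rw [card_insert_of_notMem (notMem hG), (mem_powersetCard.1 hG).2]
  rw [S_eq_biUnion, Set.ncard_coe_finset, card_biUnion]
  · refine sum_congr rfl fun j _ => ?_
    rw [card_image_of_injOn, card_powersetCard, Nat.card_Ico]
    · congr 1; omega
    intro G hG G' hG' h
    rw [← erase_insert (notMem hG), ← erase_insert (notMem hG')]
    exact congrArg (erase · n) h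
  · intro i _ j _ hij
    simp only [Function.onFun, disjoint_left, mem_image]
    rintro _ ⟨G, hG, rfl⟩ ⟨G', hG', h⟩
    exact hij (by rw [← Nat.add_right_cancel_iff, ← card_insert hG, ← h, card_insert hG'])

lemma ncard_S (n : ℕ) : (S n).ncard = Nat.fib n := by
  rw [ncard_S_eq_sum_choose]
  cases n with
  | zero => rfl
  | succ n =>
    rw [Nat.fib_succ_eq_sum_choose, ← Nat.sum_antidiagonal_swap]
    simp only [Prod.fst_swap, Prod.snd_swap]
    exact (Nat.sum_antidiagonal_eq_sum_range_succ (fun i j => j.choose i) n).symm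

theorem stmt_2 :
    (S 1).ncard = 1 ∧ (S 2).ncard = 1 ∧
      (∀ n : ℕ, 0 < n → (S (n + 2)).ncard = (S (n + 1)).ncard + (S n).ncard) ∧
      (∀ n : ℕ, 0 < n → (S n).ncard = Nat.fib n) := by
  refine ⟨ncard_S 1, ncard_S 2, fun n _ => ?_, fun n _ => ncard_S n⟩
  rw [ncard_S, ncard_S, ncard_S, Nat.fib_add_two, add_comm]
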